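/- In the proof setting of [H_⊓] ⇒ [H_⋎]: let o, p, q, r be a ⋎-tetrad through the point Z with diagonals a, b, c, let ζ be a plane not through Z, and let O, P, Q, R, A, B, C be the points where ζ meets the respective lines. Then the four lines AP, PB, BQ, QA in the plane ζ constitute a ⊓-tetrad. -/
import Mathlib


/-- A 'linear' framework for projective 3-space: a set of lines with an
incidence relation, together with the data of the two incidence-equivalence
classes `SigY`, `SigM` on `Σ(a,b)` and the derived points `pt` and planes `pl`. -/
structure LineGeom where
  L : Type
  dag : L → L → Prop
  dag_refl : ∀ l, dag l l
  dag_symm : ∀ {a b}, dag a b → dag b a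
  SigY : L → L → Set L
  SigM : L → L → Set L
  pt : L → L → Set L
  pl : L → L → Set L

namespace LineGeom

variable (G : LineGeom)

/-- `S†` : the lines incident to every line of `S`. -/
def perp (S : Set G.L) : Set G.L := {x | ∀ s ∈ S, G.dag x s}

/-- `Σ(a,b) = [a b] \ [a b]†`. -/
def Sig (a b : G.L) : Set G.L := G.perp {a, b} \ G.perp (G.perp {a, b})

/-- AXIOMS [1]-[4] together with the defining properties of the two classes
`Σ_⋎(a,b)`, `Σ_⊓(a,b)` and of the point `a ⋎ b` and plane `a ⊓ b`. -/
structure Axioms : Prop where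
  ax1 : ∀ l : G.L, ∃ x y z, x ∈ G.perp {l} ∧ y ∈ G.perp {l} ∧ z ∈ G.perp {l} ∧
      ¬ G.dag x y ∧ ¬ G.dag y z ∧ ¬ G.dag x z
  ax21 : ∀ a b : G.L, a ≠ b → G.dag a b →
      ∃ x ∈ G.perp {a, b}, ∃ y ∈ G.perp {a, b}, ¬ G.dag x y
  ax22 : ∀ a b : G.L, a ≠ b → G.dag a b → ∀ c ∈ G.Sig a b,
      ∀ x ∈ G.perp {a, b, c}, ∀ y ∈ G.perp {a, b, c}, G.dag x y
  ax23 : ∀ a b : G.L, a ≠ b → G.dag a b →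
      ∀ x ∈ G.perp {a, b}, ∀ y ∈ G.perp {a, b}, ¬ G.dag x y →
      G.perp {a, b} = G.perp {a, b, x} ∪ G.perp {a, b, y}
  ax3 : ∀ a b : G.L, a ≠ b → G.dag a b → ∀ c ∈ G.Sig a b,
      ∃ p q : G.L, p ≠ q ∧ G.dag p q ∧ ∃ r ∈ G.Sig p q,
        G.perp {a, b, c} ∩ G.perp {p, q, r} = ∅
  sig_union : ∀ a b : G.L, a ≠ b → G.dag a b →
      G.SigY a b ∪ G.SigM a b = G.Sig a b
  sig_disjoint : ∀ a b : G.L, a ≠ b → G.dag a b →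
      G.SigY a b ∩ G.SigM a b = ∅
  sigY_nonempty : ∀ a b : G.L, a ≠ b → G.dag a b → (G.SigY a b).Nonempty
  sigM_nonempty : ∀ a b : G.L, a ≠ b → G.dag a b → (G.SigM a b).Nonempty
  sig_class : ∀ a b : G.L, a ≠ b → G.dag a b → ∀ x ∈ G.Sig a b, ∀ y ∈ G.Sig a b,
      (((x ∈ G.SigY a b ∧ y ∈ G.SigY a b) ∨ (x ∈ G.SigM a b ∧ y ∈ G.SigM a b))
        ↔ G.dag x y)
  sigY_symm : ∀ a b : G.L, G.SigY a b = G.SigY b a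
  sigM_symm : ∀ a b : G.L, G.SigM a b = G.SigM b a
  pt_spec : ∀ a b : G.L, a ≠ b → G.dag a b → ∀ c ∈ G.SigY a b,
      G.pt a b = G.perp {a, b, c}
  pl_spec : ∀ a b : G.L, a ≠ b → G.dag a b → ∀ c ∈ G.SigM a b,
      G.pl a b = G.perp {a, b, c}
  ax4 : ∀ a b p q : G.L, a ≠ b → G.dag a b → p ≠ q → G.dag p q →
      (G.pt a b ∩ G.pt p q).Nonempty ∧ (G.pl a b ∩ G.pl p q).Nonempty

/-- Three pairwise-incident distinct lines forming a triad. -/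
def Triad (a b c : G.L) : Prop :=
  a ≠ b ∧ b ≠ c ∧ a ≠ c ∧ G.dag a b ∧ G.dag b c ∧ G.dag a c ∧
  a ∈ G.Sig b c ∧ b ∈ G.Sig c a ∧ c ∈ G.Sig a b

/-- A `⊓`-triad. -/
def MTriad (a b c : G.L) : Prop :=
  a ≠ b ∧ b ≠ c ∧ a ≠ c ∧ G.dag a b ∧ G.dag b c ∧ G.dag a c ∧
  a ∈ G.SigM b c ∧ b ∈ G.SigM c a ∧ c ∈ G.SigM a b

/-- A `⋎`-triad. -/
def YTriad (a b c : G.L) : Prop :=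
  a ≠ b ∧ b ≠ c ∧ a ≠ c ∧ G.dag a b ∧ G.dag b c ∧ G.dag a c ∧
  a ∈ G.SigY b c ∧ b ∈ G.SigY c a ∧ c ∈ G.SigY a b

/-- A `⊓`-tetrad: each of the four included triples is a `⊓`-triad. -/
def MTetrad (o p q r : G.L) : Prop :=
  G.MTriad p q r ∧ G.MTriad o q r ∧ G.MTriad o r p ∧ G.MTriad o p q

/-- A `⋎`-tetrad. -/
def YTetrad (o p q r : G.L) : Prop :=
  G.YTriad p q r ∧ G.YTriad o q r ∧ G.YTriad o r p ∧ G.YTriad o p q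

/-- A point: a set of lines of the form `x ⋎ y`. -/
def IsPoint (X : Set G.L) : Prop := ∃ x y : G.L, x ≠ y ∧ G.dag x y ∧ X = G.pt x y

/-- A plane: a set of lines of the form `x ⊓ y`. -/
def IsPlane (X : Set G.L) : Prop := ∃ x y : G.L, x ≠ y ∧ G.dag x y ∧ X = G.pl x y

end LineGeom

namespace LineGeom

variable {G : LineGeom} {a b c u v w x y m n j : G.L} {X Y W Z : Set G.L}

lemma mem_perp_pair : c ∈ G.perp {a, b} ↔ G.dag c a ∧ G.dag c b := by
  simp [perp]

lemma mem_perp_triple : w ∈ G.perp {a, b, c} ↔ G.dag w a ∧ G.dag w b ∧ G.dag w c := by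
  simp [perp]

lemma sigY_sub_sig (hG : G.Axioms) (hab : a ≠ b) (hd : G.dag a b) :
    G.SigY a b ⊆ G.Sig a b := by
  rw [← hG.sig_union a b hab hd]; exact Set.subset_union_left

lemma sigM_sub_sig (hG : G.Axioms) (hab : a ≠ b) (hd : G.dag a b) :
    G.SigM a b ⊆ G.Sig a b := by
  rw [← hG.sig_union a b hab hd]; exact Set.subset_union_right

lemma sig_dag_left (h : c ∈ G.Sig a b) : G.dag c a := (mem_perp_pair.1 h.1).1

lemma sig_dag_right (h : c ∈ G.Sig a b) : G.dag c b := (mem_perp_pair.1 h.1).2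

lemma mem_pt_of (hG : G.Axioms) (hab : a ≠ b) (hd : G.dag a b)
    (h1 : G.dag w a) (h2 : G.dag w b) (hc : c ∈ G.SigY a b) (h3 : G.dag w c) :
    w ∈ G.pt a b := by
  rw [hG.pt_spec a b hab hd c hc]; exact mem_perp_triple.2 ⟨h1, h2, h3⟩

lemma mem_pl_of (hG : G.Axioms) (hab : a ≠ b) (hd : G.dag a b)
    (h1 : G.dag w a) (h2 : G.dag w b) (hc : c ∈ G.SigM a b) (h3 : G.dag w c) :
    w ∈ G.pl a b := by
  rw [hG.pl_spec a b hab hd c hc]; exact mem_perp_triple.2 ⟨h1, h2, h3⟩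

lemma mem_pt_left (hG : G.Axioms) (hab : a ≠ b) (hd : G.dag a b) : a ∈ G.pt a b := by
  obtain ⟨c, hc⟩ := hG.sigY_nonempty a b hab hd
  exact mem_pt_of hG hab hd (G.dag_refl a) hd hc
    (G.dag_symm (sig_dag_left (sigY_sub_sig hG hab hd hc)))

lemma mem_pt_right (hG : G.Axioms) (hab : a ≠ b) (hd : G.dag a b) : b ∈ G.pt a b := by
  obtain ⟨c, hc⟩ := hG.sigY_nonempty a b hab hd
  exact mem_pt_of hG hab hd (G.dag_symm hd) (G.dag_refl b) hc
    (G.dag_symm (sig_dag_right (sigY_sub_sig hG hab hd hc)))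

lemma mem_pl_left (hG : G.Axioms) (hab : a ≠ b) (hd : G.dag a b) : a ∈ G.pl a b := by
  obtain ⟨c, hc⟩ := hG.sigM_nonempty a b hab hd
  exact mem_pl_of hG hab hd (G.dag_refl a) hd hc
    (G.dag_symm (sig_dag_left (sigM_sub_sig hG hab hd hc)))

lemma mem_pl_right (hG : G.Axioms) (hab : a ≠ b) (hd : G.dag a b) : b ∈ G.pl a b := by
  obtain ⟨c, hc⟩ := hG.sigM_nonempty a b hab hd
  exact mem_pl_of hG hab hd (G.dag_symm hd) (G.dag_refl b) hc
    (G.dag_symm (sig_dag_right (sigM_sub_sig hG hab hd hc)))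

lemma sigY_sub_pt (hG : G.Axioms) (hab : a ≠ b) (hd : G.dag a b) :
    G.SigY a b ⊆ G.pt a b := fun c hc => by
  have hs := sigY_sub_sig hG hab hd hc
  exact mem_pt_of hG hab hd (sig_dag_left hs) (sig_dag_right hs) hc (G.dag_refl c)

lemma sigM_sub_pl (hG : G.Axioms) (hab : a ≠ b) (hd : G.dag a b) :
    G.SigM a b ⊆ G.pl a b := fun c hc => by
  have hs := sigM_sub_sig hG hab hd hc
  exact mem_pl_of hG hab hd (sig_dag_left hs) (sig_dag_right hs) hc (G.dag_refl c)

lemma not_dag_YM (hG : G.Axioms) (hab : a ≠ b) (hd : G.dag a b)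
    (hu : u ∈ G.SigY a b) (hv : v ∈ G.SigM a b) : ¬ G.dag u v := by
  intro hdag
  have hcl := (hG.sig_class a b hab hd u (sigY_sub_sig hG hab hd hu)
    v (sigM_sub_sig hG hab hd hv)).2 hdag
  have hdisj := hG.sig_disjoint a b hab hd
  rcases hcl with ⟨_, h2⟩ | ⟨h1, _⟩
  · exact absurd (Set.mem_inter h2 hv) (by rw [hdisj]; exact Set.notMem_empty v)
  · exact absurd (Set.mem_inter hu h1) (by rw [hdisj]; exact Set.notMem_empty u)

lemma sigY_not_mem_pl (hG : G.Axioms) (hab : a ≠ b) (hd : G.dag a b)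
    (hu : u ∈ G.SigY a b) : u ∉ G.pl a b := by
  obtain ⟨m, hm⟩ := hG.sigM_nonempty a b hab hd
  rw [hG.pl_spec a b hab hd m hm]
  intro h
  exact not_dag_YM hG hab hd hu hm (mem_perp_triple.1 h).2.2

lemma sigM_not_mem_pt (hG : G.Axioms) (hab : a ≠ b) (hd : G.dag a b)
    (hu : u ∈ G.SigM a b) : u ∉ G.pt a b := by
  obtain ⟨m, hm⟩ := hG.sigY_nonempty a b hab hd
  rw [hG.pt_spec a b hab hd m hm]
  intro h
  exact not_dag_YM hG hab hd hm hu (G.dag_symm (mem_perp_triple.1 h).2.2)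

lemma perp_pair_eq (hG : G.Axioms) (hab : a ≠ b) (hd : G.dag a b) :
    G.perp {a, b} = G.pt a b ∪ G.pl a b := by
  obtain ⟨m, hm⟩ := hG.sigY_nonempty a b hab hd
  obtain ⟨n, hn⟩ := hG.sigM_nonempty a b hab hd
  have hmp := (sigY_sub_sig hG hab hd hm).1
  have hnp := (sigM_sub_sig hG hab hd hn).1
  rw [hG.pt_spec a b hab hd m hm, hG.pl_spec a b hab hd n hn]
  exact hG.ax23 a b hab hd m hmp n hnp (not_dag_YM hG hab hd hm hn)

lemma mem_sigY_of (hG : G.Axioms) (hab : a ≠ b) (hd : G.dag a b)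
    (h1 : G.dag c a) (h2 : G.dag c b) (h3 : c ∉ G.pl a b) : c ∈ G.SigY a b := by
  have hperp : c ∈ G.perp {a, b} := mem_perp_pair.2 ⟨h1, h2⟩
  have hpt : c ∈ G.pt a b := by
    have := perp_pair_eq hG hab hd ▸ hperp
    exact this.resolve_right h3
  have hsig : c ∈ G.Sig a b := by
    refine ⟨hperp, fun hpp => h3 ?_⟩
    obtain ⟨n, hn⟩ := hG.sigM_nonempty a b hab hd
    have hnp := (sigM_sub_sig hG hab hd hn).1
    rw [hG.pl_spec a b hab hd n hn]
    exact mem_perp_triple.2 ⟨h1, h2, hpp n hnp⟩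
  rw [← hG.sig_union a b hab hd] at hsig
  exact hsig.resolve_right fun hM => h3 (sigM_sub_pl hG hab hd hM)

lemma mem_sigM_of (hG : G.Axioms) (hab : a ≠ b) (hd : G.dag a b)
    (h1 : G.dag c a) (h2 : G.dag c b) (h3 : c ∉ G.pt a b) : c ∈ G.SigM a b := by
  have hperp : c ∈ G.perp {a, b} := mem_perp_pair.2 ⟨h1, h2⟩
  have hpl : c ∈ G.pl a b := by
    have := perp_pair_eq hG hab hd ▸ hperp
    exact this.resolve_left h3
  have hsig : c ∈ G.Sig a b := by
    refine ⟨hperp, fun hpp => h3 ?_⟩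
    obtain ⟨n, hn⟩ := hG.sigY_nonempty a b hab hd
    have hnp := (sigY_sub_sig hG hab hd hn).1
    rw [hG.pt_spec a b hab hd n hn]
    exact mem_perp_triple.2 ⟨h1, h2, hpp n hnp⟩
  rw [← hG.sig_union a b hab hd] at hsig
  exact hsig.resolve_left fun hY => h3 (sigY_sub_pt hG hab hd hY)

lemma IsPoint.flat (hG : G.Axioms) (hX : G.IsPoint X) (hu : u ∈ X) (hv : v ∈ X) :
    G.dag u v := by
  obtain ⟨x, y, hxy, hd, rfl⟩ := hX
  obtain ⟨m, hm⟩ := hG.sigY_nonempty x y hxy hd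
  rw [hG.pt_spec x y hxy hd m hm] at hu hv
  exact hG.ax22 x y hxy hd m (sigY_sub_sig hG hxy hd hm) u hu v hv

lemma IsPlane.flat (hG : G.Axioms) (hX : G.IsPlane X) (hu : u ∈ X) (hv : v ∈ X) :
    G.dag u v := by
  obtain ⟨x, y, hxy, hd, rfl⟩ := hX
  obtain ⟨m, hm⟩ := hG.sigM_nonempty x y hxy hd
  rw [hG.pl_spec x y hxy hd m hm] at hu hv
  exact hG.ax22 x y hxy hd m (sigM_sub_sig hG hxy hd hm) u hu v hv

lemma perp3_subset (hG : G.Axioms) (hab : a ≠ b) (hd : G.dag a b) (hc : c ∈ G.Sig a b)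
    (hx : x ∈ G.perp {a, b, c}) (hy : y ∈ G.perp {a, b, c}) (hw : w ∈ G.perp {a, b, c}) :
    G.perp {a, b, c} ⊆ G.perp {x, y, w} := fun l hl => mem_perp_triple.2
  ⟨hG.ax22 a b hab hd c hc l hl x hx, hG.ax22 a b hab hd c hc l hl y hy,
   hG.ax22 a b hab hd c hc l hl w hw⟩

lemma plane_uniq_wit (hG : G.Axioms) (hW : G.IsPlane W) (hu : u ∈ W) (hv : v ∈ W)
    (huv : u ≠ v) (hw : w ∈ W) (hwpt : w ∉ G.pt u v) : G.pl u v = W := by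
  have hd : G.dag u v := hW.flat hG hu hv
  have hwM : w ∈ G.SigM u v :=
    mem_sigM_of hG huv hd (hW.flat hG hw hu) (hW.flat hG hw hv) hwpt
  rw [hG.pl_spec u v huv hd w hwM]
  obtain ⟨s, t, hst, hdst, rfl⟩ := hW
  obtain ⟨m, hm⟩ := hG.sigM_nonempty s t hst hdst
  have hWeq := hG.pl_spec s t hst hdst m hm
  rw [hWeq] at hu hv hw ⊢
  have hmS := sigM_sub_sig hG hst hdst hm
  have huvw : ∀ l ∈ G.perp {s, t, m}, l ∈ G.perp {u, v, w} := fun l hl =>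
    mem_perp_triple.2 ⟨hG.ax22 s t hst hdst m hmS l hl u hu,
      hG.ax22 s t hst hdst m hmS l hl v hv, hG.ax22 s t hst hdst m hmS l hl w hw⟩
  have hs : s ∈ G.perp {s, t, m} := mem_perp_triple.2 ⟨G.dag_refl s, hdst,
    G.dag_symm (sig_dag_left hmS)⟩
  have ht : t ∈ G.perp {s, t, m} := mem_perp_triple.2 ⟨G.dag_symm hdst, G.dag_refl t,
    G.dag_symm (sig_dag_right hmS)⟩
  have hmm : m ∈ G.perp {s, t, m} := mem_perp_triple.2 ⟨sig_dag_left hmS,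
    sig_dag_right hmS, G.dag_refl m⟩
  exact Set.Subset.antisymm
    (perp3_subset hG huv hd (sigM_sub_sig hG huv hd hwM) (huvw s hs) (huvw t ht) (huvw m hmm))
    (perp3_subset hG hst hdst hmS hu hv hw)

lemma not_point_and_plane (hG : G.Axioms) (hX : G.IsPoint X) (hX' : G.IsPlane X) :
    False := by
  obtain ⟨x, y, hxy, hd, rfl⟩ := hX
  obtain ⟨m, hm⟩ := hG.sigY_nonempty x y hxy hd
  obtain ⟨p, q, hpq, hdpq, r, hr, hempty⟩ :=
    hG.ax3 x y hxy hd m (sigY_sub_sig hG hxy hd hm)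
  rw [← hG.pt_spec x y hxy hd m hm] at hempty
  have hrs := hG.sig_union p q hpq hdpq ▸ hr
  rcases hrs with hrY | hrM
  · rw [← hG.pt_spec p q hpq hdpq r hrY] at hempty
    obtain ⟨l, hl⟩ := (hG.ax4 x y p q hxy hd hpq hdpq).1
    rw [hempty] at hl; exact hl
  · rw [← hG.pl_spec p q hpq hdpq r hrM] at hempty
    obtain ⟨s, t, hst, hdst, hXeq⟩ := hX'
    obtain ⟨l, hl⟩ := (hG.ax4 s t p q hst hdst hpq hdpq).2
    rw [← hXeq, hempty] at hl; exact hl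

lemma point_not_sub_plane (hG : G.Axioms) (hX : G.IsPoint X) (hW : G.IsPlane W)
    (hsub : X ⊆ W) : False := by
  obtain ⟨x, y, hxy, hd, rfl⟩ := hX
  by_cases hex : ∃ w ∈ W, w ∉ G.pt x y
  · obtain ⟨w, hwW, hwpt⟩ := hex
    have heq := plane_uniq_wit hG hW (hsub (mem_pt_left hG hxy hd))
      (hsub (mem_pt_right hG hxy hd)) hxy hwW hwpt
    obtain ⟨m, hm⟩ := hG.sigY_nonempty x y hxy hd
    exact sigY_not_mem_pl hG hxy hd hm (heq ▸ hsub (sigY_sub_pt hG hxy hd hm))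
  · push_neg at hex
    have : G.pt x y = W := Set.Subset.antisymm hsub hex
    exact not_point_and_plane hG ⟨x, y, hxy, hd, rfl⟩ (this ▸ hW)

lemma pt_uniq (hG : G.Axioms) (hX : G.IsPoint X) (hu : u ∈ X) (hv : v ∈ X)
    (huv : u ≠ v) : G.pt u v = X := by
  have hd : G.dag u v := hX.flat hG hu hv
  by_cases hex : ∃ w ∈ X, w ∉ G.pl u v
  · obtain ⟨w, hwX, hwpl⟩ := hex
    have hwY : w ∈ G.SigY u v :=
      mem_sigY_of hG huv hd (hX.flat hG hwX hu) (hX.flat hG hwX hv) hwpl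
    rw [hG.pt_spec u v huv hd w hwY]
    obtain ⟨s, t, hst, hdst, rfl⟩ := hX
    obtain ⟨m, hm⟩ := hG.sigY_nonempty s t hst hdst
    have hXeq := hG.pt_spec s t hst hdst m hm
    rw [hXeq] at hu hv hwX ⊢
    have hmS := sigY_sub_sig hG hst hdst hm
    have huvw : ∀ l ∈ G.perp {s, t, m}, l ∈ G.perp {u, v, w} := fun l hl =>
      mem_perp_triple.2 ⟨hG.ax22 s t hst hdst m hmS l hl u hu,
        hG.ax22 s t hst hdst m hmS l hl v hv, hG.ax22 s t hst hdst m hmS l hl w hwX⟩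
    have hs : s ∈ G.perp {s, t, m} := mem_perp_triple.2 ⟨G.dag_refl s, hdst,
      G.dag_symm (sig_dag_left hmS)⟩
    have ht : t ∈ G.perp {s, t, m} := mem_perp_triple.2 ⟨G.dag_symm hdst, G.dag_refl t,
      G.dag_symm (sig_dag_right hmS)⟩
    have hmm : m ∈ G.perp {s, t, m} := mem_perp_triple.2 ⟨sig_dag_left hmS,
      sig_dag_right hmS, G.dag_refl m⟩
    exact Set.Subset.antisymm
      (perp3_subset hG huv hd (sigY_sub_sig hG huv hd hwY) (huvw s hs) (huvw t ht) (huvw m hmm))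
      (perp3_subset hG hst hdst hmS hu hv hwX)
  · push_neg at hex
    exact (point_not_sub_plane hG hX ⟨u, v, huv, hd, rfl⟩ hex).elim

lemma plane_not_sub_point (hG : G.Axioms) (hW : G.IsPlane W) (hX : G.IsPoint X)
    (hsub : W ⊆ X) : False := by
  obtain ⟨s, t, hst, hdst, rfl⟩ := hW
  have heq := pt_uniq hG hX (hsub (mem_pl_left hG hst hdst))
    (hsub (mem_pl_right hG hst hdst)) hst
  obtain ⟨m, hm⟩ := hG.sigM_nonempty s t hst hdst
  exact sigM_not_mem_pt hG hst hdst hm (heq ▸ hsub (sigM_sub_pl hG hst hdst hm))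

lemma pl_uniq (hG : G.Axioms) (hW : G.IsPlane W) (hu : u ∈ W) (hv : v ∈ W)
    (huv : u ≠ v) : G.pl u v = W := by
  have hd : G.dag u v := hW.flat hG hu hv
  by_cases hex : ∃ w ∈ W, w ∉ G.pt u v
  · obtain ⟨w, hwW, hwpt⟩ := hex
    exact plane_uniq_wit hG hW hu hv huv hwW hwpt
  · push_neg at hex
    exact (plane_not_sub_point hG hW ⟨u, v, huv, hd, rfl⟩ hex).elim

lemma points_eq (hG : G.Axioms) (hX : G.IsPoint X) (hY : G.IsPoint Y) (huv : u ≠ v)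
    (huX : u ∈ X) (hvX : v ∈ X) (huY : u ∈ Y) (hvY : v ∈ Y) : X = Y :=
  (pt_uniq hG hX huX hvX huv).symm.trans (pt_uniq hG hY huY hvY huv)

lemma planes_eq (hG : G.Axioms) (hX : G.IsPlane X) (hY : G.IsPlane Y) (huv : u ≠ v)
    (huX : u ∈ X) (hvX : v ∈ X) (huY : u ∈ Y) (hvY : v ∈ Y) : X = Y :=
  (pl_uniq hG hX huX hvX huv).symm.trans (pl_uniq hG hY huY hvY huv)

lemma join_in_plane (hG : G.Axioms) (hX : G.IsPoint X) (hY : G.IsPoint Y)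
    (hW : G.IsPlane W) (hXY : X ≠ Y) (hmX : m ∈ X) (hmW : m ∈ W)
    (hnY : n ∈ Y) (hnW : n ∈ W) (hjX : j ∈ X) (hjY : j ∈ Y) : j ∈ W := by
  by_contra hj
  have hmj : m ≠ j := fun h => hj (h ▸ hmW)
  have hnj : n ≠ j := fun h => hj (h ▸ hnW)
  by_cases hmn : m = n
  · subst hmn
    exact hXY (points_eq hG hX hY hmj hmX hjX hnY hjY)
  · have hdmn : G.dag m n := hW.flat hG hmW hnW
    have hjperp : j ∈ G.perp {m, n} :=
      mem_perp_pair.2 ⟨hX.flat hG hjX hmX, hY.flat hG hjY hnY⟩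
    rw [perp_pair_eq hG hmn hdmn] at hjperp
    have hplW : G.pl m n = W := pl_uniq hG hW hmW hnW hmn
    have hjpt : j ∈ G.pt m n := hjperp.resolve_right (fun h => hj (hplW ▸ h))
    have hPt : G.IsPoint (G.pt m n) := ⟨m, n, hmn, hdmn, rfl⟩
    have hXeq : X = G.pt m n :=
      points_eq hG hX hPt hmj hmX hjX (mem_pt_left hG hmn hdmn) hjpt
    have hYeq : Y = G.pt m n :=
      points_eq hG hY hPt hnj hnY hjY (mem_pt_right hG hmn hdmn) hjpt
    exact hXY (hXeq.trans hYeq.symm)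

end LineGeom
open LineGeom

/-- Let `o, p, q, r` be a `⋎`-tetrad through the point `Z` with
diagonals `a, b, c`, let `ζ` be a plane not through `Z`, and let
`O, P, Q, R, A, B, C` be the points where `ζ` meets the respective lines.
Then the four lines `AP, PB, BQ, QA` of the plane `ζ` form a `⊓`-tetrad. -/
theorem stmt_9 (G : LineGeom) (hG : G.Axioms) (o p q r a b c : G.L)
    (Z ζ O P Q R A B C : Set G.L)
    (hT : G.YTetrad o p q r)
    (hZ : G.IsPoint Z) (hoZ : o ∈ Z) (hpZ : p ∈ Z) (hqZ : q ∈ Z) (hrZ : r ∈ Z)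
    (ha : G.pl o p ∩ G.pl q r = {a})
    (hb : G.pl o q ∩ G.pl r p = {b})
    (hc : G.pl o r ∩ G.pl p q = {c})
    (hζ : G.IsPlane ζ) (hZζ : Z ∩ ζ = ∅)
    (hO : G.IsPoint O) (hoO : o ∈ O) (hOζ : (O ∩ ζ).Nonempty)
    (hP : G.IsPoint P) (hpP : p ∈ P) (hPζ : (P ∩ ζ).Nonempty)
    (hQ : G.IsPoint Q) (hqQ : q ∈ Q) (hQζ : (Q ∩ ζ).Nonempty)
    (hR : G.IsPoint R) (hrR : r ∈ R) (hRζ : (R ∩ ζ).Nonempty)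
    (hA : G.IsPoint A) (haA : a ∈ A) (hAζ : (A ∩ ζ).Nonempty)
    (hB : G.IsPoint B) (hbB : b ∈ B) (hBζ : (B ∩ ζ).Nonempty)
    (hC : G.IsPoint C) (hcC : c ∈ C) (hCζ : (C ∩ ζ).Nonempty)
    (ap pb bq qa : G.L)
    (hap : A ∩ P = {ap}) (hpb : P ∩ B = {pb})
    (hbq : B ∩ Q = {bq}) (hqa : Q ∩ A = {qa}) :
    G.MTetrad ap pb bq qa := by

  classical
  obtain ⟨Tpqr, Toqr, Torp, Topq⟩ := hT
  obtain ⟨hpq, hqr, hpr, dpq, dqr, dpr, hp_qr, hq_rp, hr_pq⟩ := Tpqr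
  obtain ⟨hoq, hqr2, hor, doq, dqr2, dor, ho_qr, hq_ro, hr_oq⟩ := Toqr
  obtain ⟨hor2, hrp, hop2, dor2, drp, dop2, ho_rp, hr_po, hp_or⟩ := Torp
  obtain ⟨hop, hpq2, hoq2, dop, dpq2, doq2, ho_pq, hp_qo, hq_op⟩ := Topq
  have hPLop : G.IsPlane (G.pl o p) := ⟨o, p, hop, dop, rfl⟩
  have hPLqr : G.IsPlane (G.pl q r) := ⟨q, r, hqr, dqr, rfl⟩
  have hPLoq : G.IsPlane (G.pl o q) := ⟨o, q, hoq, doq, rfl⟩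
  have hPLrp : G.IsPlane (G.pl r p) := ⟨r, p, hrp, drp, rfl⟩
  have haop : a ∈ G.pl o p := (ha.symm.subset rfl).1
  have haqr : a ∈ G.pl q r := (ha.symm.subset rfl).2
  have hboq : b ∈ G.pl o q := (hb.symm.subset rfl).1
  have hbrp : b ∈ G.pl r p := (hb.symm.subset rfl).2
  have dao : G.dag a o := hPLop.flat hG haop (mem_pl_left hG hop dop)
  have dap2 : G.dag a p := hPLop.flat hG haop (mem_pl_right hG hop dop)
  have daq : G.dag a q := hPLqr.flat hG haqr (mem_pl_left hG hqr dqr)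
  have dar : G.dag a r := hPLqr.flat hG haqr (mem_pl_right hG hqr dqr)
  have dbo : G.dag b o := hPLoq.flat hG hboq (mem_pl_left hG hoq doq)
  have dbq2 : G.dag b q := hPLoq.flat hG hboq (mem_pl_right hG hoq doq)
  have dbr : G.dag b r := hPLrp.flat hG hbrp (mem_pl_left hG hrp drp)
  have dbp : G.dag b p := hPLrp.flat hG hbrp (mem_pl_right hG hrp drp)
  have hptop : G.pt o p = Z := pt_uniq hG hZ hoZ hpZ hop
  have hptqr : G.pt q r = Z := pt_uniq hG hZ hqZ hrZ hqr
  have hptoq : G.pt o q = Z := pt_uniq hG hZ hoZ hqZ hoq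
  have hptrp : G.pt r p = Z := pt_uniq hG hZ hrZ hpZ hrp
  have hp_oq : p ∈ G.SigY o q := hG.sigY_symm q o ▸ hp_qo
  have hr_op : r ∈ G.SigY o p := hG.sigY_symm p o ▸ hr_po
  have hq_or : q ∈ G.SigY o r := hG.sigY_symm r o ▸ hq_ro
  have hap_ne : a ≠ p := fun h => sigY_not_mem_pl hG hqr dqr hp_qr (h ▸ haqr)
  have hao_ne : a ≠ o := fun h => sigY_not_mem_pl hG hqr dqr ho_qr (h ▸ haqr)
  have haq_ne : a ≠ q := fun h => sigY_not_mem_pl hG hop dop hq_op (h ▸ haop)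
  have hbo_ne : b ≠ o := fun h => sigY_not_mem_pl hG hrp drp ho_rp (h ▸ hbrp)
  have hbq_ne : b ≠ q := fun h => sigY_not_mem_pl hG hrp drp hq_rp (h ▸ hbrp)
  have hbp_ne : b ≠ p := fun h => sigY_not_mem_pl hG hoq doq hp_oq (h ▸ hboq)
  have hab_ne : a ≠ b := by
    intro h
    have heq : G.pl o p = G.pl o q :=
      planes_eq hG hPLop hPLoq hao_ne.symm (mem_pl_left hG hop dop) haop
        (mem_pl_left hG hoq doq) (h ▸ hboq)
    exact sigY_not_mem_pl hG hop dop hq_op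
      (by rw [heq]; exact mem_pl_right hG hoq doq)
  have haZ : a ∈ Z := by
    by_contra hna
    have haM : a ∈ G.SigM o p :=
      mem_sigM_of hG hop dop dao dap2 (by rw [hptop]; exact hna)
    exact not_dag_YM hG hop dop hr_op haM (G.dag_symm dar)
  have hbZ : b ∈ Z := by
    by_contra hnb
    have hbM : b ∈ G.SigM o q :=
      mem_sigM_of hG hoq doq dbo dbq2 (by rw [hptoq]; exact hnb)
    exact not_dag_YM hG hoq doq hr_oq hbM (G.dag_symm dbr)
  have hemZ : ∀ m : G.L, m ∈ Z → m ∉ ζ := fun m h1 h2 =>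
    (Set.eq_empty_iff_forall_notMem.1 hZζ m) ⟨h1, h2⟩
  have hXneZ : ∀ X' : Set G.L, (X' ∩ ζ).Nonempty → X' ≠ Z := by
    rintro X' ⟨m, hm1, hm2⟩ h
    exact hemZ m (h ▸ hm1) hm2
  have hdistinct : ∀ (X' Y' : Set G.L) (u v : G.L), G.IsPoint X' →
      (X' ∩ ζ).Nonempty → u ≠ v → u ∈ X' → v ∈ Y' → u ∈ Z → v ∈ Z → X' ≠ Y' := by
    intro X' Y' u v hX' hXζ' huv huX hvY huZ hvZ h
    exact hXneZ X' hXζ' (points_eq hG hX' hZ huv huX (by rw [h]; exact hvY) huZ hvZ)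
  have hAP : A ≠ P := hdistinct A P a p hA hAζ hap_ne haA hpP haZ hpZ
  have hPB : P ≠ B := hdistinct P B p b hP hPζ hbp_ne.symm hpP hbB hpZ hbZ
  have hBQ : B ≠ Q := hdistinct B Q b q hB hBζ hbq_ne hbB hqQ hbZ hqZ
  have hQA : Q ≠ A := hdistinct Q A q a hQ hQζ haq_ne.symm hqQ haA hqZ haZ
  have hapA : ap ∈ A := (hap.symm.subset rfl).1
  have hapP : ap ∈ P := (hap.symm.subset rfl).2
  have hpbP : pb ∈ P := (hpb.symm.subset rfl).1
  have hpbB : pb ∈ B := (hpb.symm.subset rfl).2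
  have hbqB : bq ∈ B := (hbq.symm.subset rfl).1
  have hbqQ : bq ∈ Q := (hbq.symm.subset rfl).2
  have hqaQ : qa ∈ Q := (hqa.symm.subset rfl).1
  have hqaA : qa ∈ A := (hqa.symm.subset rfl).2
  obtain ⟨mA, hmAA, hmAζ⟩ := hAζ
  obtain ⟨mP, hmPP, hmPζ⟩ := hPζ
  obtain ⟨mB, hmBB, hmBζ⟩ := hBζ
  obtain ⟨mQ, hmQQ, hmQζ⟩ := hQζ
  have hapζ : ap ∈ ζ := join_in_plane hG hA hP hζ hAP hmAA hmAζ hmPP hmPζ hapA hapP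
  have hpbζ : pb ∈ ζ := join_in_plane hG hP hB hζ hPB hmPP hmPζ hmBB hmBζ hpbP hpbB
  have hbqζ : bq ∈ ζ := join_in_plane hG hB hQ hζ hBQ hmBB hmBζ hmQQ hmQζ hbqB hbqQ
  have hqaζ : qa ∈ ζ := join_in_plane hG hQ hA hζ hQA hmQQ hmQζ hmAA hmAζ hqaQ hqaA
  have hap_op : ap ∈ G.pl o p :=
    join_in_plane hG hA hP hPLop hAP haA haop hpP (mem_pl_right hG hop dop) hapA hapP
  have hpb_rp : pb ∈ G.pl r p :=
    join_in_plane hG hP hB hPLrp hPB hpP (mem_pl_right hG hrp drp) hbB hbrp hpbP hpbB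
  have hbq_oq : bq ∈ G.pl o q :=
    join_in_plane hG hB hQ hPLoq hBQ hbB hboq hqQ (mem_pl_right hG hoq doq) hbqB hbqQ
  have hqa_qr : qa ∈ G.pl q r :=
    join_in_plane hG hQ hA hPLqr hQA hqQ (mem_pl_left hG hqr dqr) haA haqr hqaQ hqaA
  have hb_op : b ∈ G.SigY o p := by
    refine mem_sigY_of hG hop dop dbo dbp ?_
    intro hbpl
    have heq : G.pl o p = G.pl o q :=
      planes_eq hG hPLop hPLoq hbo_ne.symm (mem_pl_left hG hop dop) hbpl
        (mem_pl_left hG hoq doq) hboq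
    exact sigY_not_mem_pl hG hop dop hq_op
      (by rw [heq]; exact mem_pl_right hG hoq doq)
  have ha_rp : a ∈ G.SigY r p := by
    refine mem_sigY_of hG hrp drp dar dap2 ?_
    intro hapl
    have heq : G.pl o p = G.pl r p :=
      planes_eq hG hPLop hPLrp hap_ne.symm (mem_pl_right hG hop dop) haop
        (mem_pl_right hG hrp drp) hapl
    exact sigY_not_mem_pl hG hrp drp ho_rp
      (by rw [← heq]; exact mem_pl_left hG hop dop)
  have ha_oq : a ∈ G.SigY o q := by
    refine mem_sigY_of hG hoq doq dao daq ?_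
    intro hapl
    have heq : G.pl o p = G.pl o q :=
      planes_eq hG hPLop hPLoq hao_ne.symm (mem_pl_left hG hop dop) haop
        (mem_pl_left hG hoq doq) hapl
    exact sigY_not_mem_pl hG hop dop hq_op
      (by rw [heq]; exact mem_pl_right hG hoq doq)
  have hb_qr : b ∈ G.SigY q r := by
    refine mem_sigY_of hG hqr dqr dbq2 dbr ?_
    intro hbpl
    have heq : G.pl o q = G.pl q r :=
      planes_eq hG hPLoq hPLqr hbq_ne.symm (mem_pl_right hG hoq doq) hboq
        (mem_pl_left hG hqr dqr) hbpl
    exact sigY_not_mem_pl hG hqr dqr ho_qr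
      (by rw [← heq]; exact mem_pl_left hG hoq doq)
  have side_not : ∀ (s w x y : G.L) (W' : Set G.L), G.IsPoint W' → x ≠ y →
      G.dag x y → w ∈ G.SigY x y → w ∈ W' → s ∈ ζ → s ∈ G.pl x y →
      G.pt x y = Z → s ∉ W' := by
    intro s w x y W' hW' hxy hdxy hwY hwW hsζ hspl hZeq hsW
    have hPL : G.IsPlane (G.pl x y) := ⟨x, y, hxy, hdxy, rfl⟩
    have hsx : G.dag s x := hPL.flat hG hspl (mem_pl_left hG hxy hdxy)
    have hsy : G.dag s y := hPL.flat hG hspl (mem_pl_right hG hxy hdxy)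
    have hds : G.dag s w := hW'.flat hG hsW hwW
    exact hemZ s (hZeq ▸ mem_pt_of hG hxy hdxy hsx hsy hwY hds) hsζ
  have apQ : ap ∉ Q := side_not ap q o p Q hQ hop dop hq_op hqQ hapζ hap_op hptop
  have apB : ap ∉ B := side_not ap b o p B hB hop dop hb_op hbB hapζ hap_op hptop
  have pbQ : pb ∉ Q := side_not pb q r p Q hQ hrp drp hq_rp hqQ hpbζ hpb_rp hptrp
  have pbA : pb ∉ A := side_not pb a r p A hA hrp drp ha_rp haA hpbζ hpb_rp hptrp
  have bqA : bq ∉ A := side_not bq a o q A hA hoq doq ha_oq haA hbqζ hbq_oq hptoq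
  have bqP : bq ∉ P := side_not bq p o q P hP hoq doq hp_oq hpP hbqζ hbq_oq hptoq
  have qaP : qa ∉ P := side_not qa p q r P hP hqr dqr hp_qr hpP hqaζ hqa_qr hptqr
  have qaB : qa ∉ B := side_not qa b q r B hB hqr dqr hb_qr hbB hqaζ hqa_qr hptqr
  have nAPPB : ap ≠ pb := fun h => apB (h ▸ hpbB)
  have nAPBQ : ap ≠ bq := fun h => apB (h ▸ hbqB)
  have nAPQA : ap ≠ qa := fun h => apQ (h ▸ hqaQ)
  have nPBBQ : pb ≠ bq := fun h => pbQ (h ▸ hbqQ)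
  have nPBQA : pb ≠ qa := fun h => pbQ (h ▸ hqaQ)
  have nBQQA : bq ≠ qa := fun h => bqA (h ▸ hqaA)
  have dAPPB : G.dag ap pb := hζ.flat hG hapζ hpbζ
  have dAPBQ : G.dag ap bq := hζ.flat hG hapζ hbqζ
  have dAPQA : G.dag ap qa := hζ.flat hG hapζ hqaζ
  have dPBBQ : G.dag pb bq := hζ.flat hG hpbζ hbqζ
  have dPBQA : G.dag pb qa := hζ.flat hG hpbζ hqaζ
  have dBQQA : G.dag bq qa := hζ.flat hG hbqζ hqaζ
  have EP : G.pt ap pb = P := pt_uniq hG hP hapP hpbP nAPPB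
  have EB : G.pt pb bq = B := pt_uniq hG hB hpbB hbqB nPBBQ
  have EQ : G.pt bq qa = Q := pt_uniq hG hQ hbqQ hqaQ nBQQA
  have EA : G.pt qa ap = A := pt_uniq hG hA hqaA hapA nAPQA.symm
  have EA2 : G.pt ap qa = A := pt_uniq hG hA hapA hqaA nAPQA
  have EP2 : G.pt pb ap = P := pt_uniq hG hP hpbP hapP nAPPB.symm
  -- diagonal non-copunctality helpers
  have diag1 : bq ∉ G.pt qa pb := by
    intro hmem
    have hPtF : G.IsPoint (G.pt qa pb) := ⟨qa, pb, nPBQA.symm, G.dag_symm dPBQA, rfl⟩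
    have hFQ : G.pt qa pb = Q :=
      points_eq hG hPtF hQ nBQQA.symm (mem_pt_left hG nPBQA.symm (G.dag_symm dPBQA)) hmem
        hqaQ hbqQ
    exact pbQ (hFQ ▸ mem_pt_right hG nPBQA.symm (G.dag_symm dPBQA))
  have diag2 : qa ∉ G.pt ap bq := by
    intro hmem
    have hPtE : G.IsPoint (G.pt ap bq) := ⟨ap, bq, nAPBQ, dAPBQ, rfl⟩
    have hEA : G.pt ap bq = A :=
      points_eq hG hPtE hA nAPQA (mem_pt_left hG nAPBQ dAPBQ) hmem hapA hqaA
    exact bqA (hEA ▸ mem_pt_right hG nAPBQ dAPBQ)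
  have diag3 : ap ∉ G.pt qa pb := by
    intro hmem
    have hPtF : G.IsPoint (G.pt qa pb) := ⟨qa, pb, nPBQA.symm, G.dag_symm dPBQA, rfl⟩
    have hFA : G.pt qa pb = A :=
      points_eq hG hPtF hA nAPQA.symm (mem_pt_left hG nPBQA.symm (G.dag_symm dPBQA)) hmem
        hqaA hapA
    exact pbA (hFA ▸ mem_pt_right hG nPBQA.symm (G.dag_symm dPBQA))
  have diag4 : pb ∉ G.pt bq ap := by
    intro hmem
    have hPtE : G.IsPoint (G.pt bq ap) := ⟨bq, ap, nAPBQ.symm, G.dag_symm dAPBQ, rfl⟩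
    have hEP : G.pt bq ap = P :=
      points_eq hG hPtE hP nAPPB (mem_pt_right hG nAPBQ.symm (G.dag_symm dAPBQ)) hmem
        hapP hpbP
    exact bqP (hEP ▸ mem_pt_left hG nAPBQ.symm (G.dag_symm dAPBQ))
  refine ⟨⟨nPBBQ, nBQQA, nPBQA, dPBBQ, dBQQA, dPBQA, ?_, ?_, ?_⟩,
    ⟨nAPBQ, nBQQA, nAPQA, dAPBQ, dBQQA, dAPQA, ?_, ?_, ?_⟩,
    ⟨nAPQA, nPBQA.symm, nAPPB, dAPQA, G.dag_symm dPBQA, dAPPB, ?_, ?_, ?_⟩,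
    ⟨nAPPB, nPBBQ, nAPBQ, dAPPB, dPBBQ, dAPBQ, ?_, ?_, ?_⟩⟩
  · exact mem_sigM_of hG nBQQA dBQQA dPBBQ dPBQA (by rw [EQ]; exact pbQ)
  · exact mem_sigM_of hG nPBQA.symm (G.dag_symm dPBQA) dBQQA (G.dag_symm dPBBQ) diag1
  · exact mem_sigM_of hG nPBBQ dPBBQ (G.dag_symm dPBQA) (G.dag_symm dBQQA)
      (by rw [EB]; exact qaB)
  · exact mem_sigM_of hG nBQQA dBQQA dAPBQ dAPQA (by rw [EQ]; exact apQ)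
  · exact mem_sigM_of hG nAPQA.symm (G.dag_symm dAPQA) dBQQA (G.dag_symm dAPBQ)
      (by rw [EA]; exact bqA)
  · exact mem_sigM_of hG nAPBQ dAPBQ (G.dag_symm dAPQA) (G.dag_symm dBQQA) diag2
  · exact mem_sigM_of hG nPBQA.symm (G.dag_symm dPBQA) dAPQA dAPPB diag3
  · exact mem_sigM_of hG nAPPB.symm (G.dag_symm dAPPB) (G.dag_symm dPBQA)
      (G.dag_symm dAPQA) (by rw [EP2]; exact qaP)
  · exact mem_sigM_of hG nAPQA dAPQA (G.dag_symm dAPPB) dPBQA (by rw [EA2]; exact pbA)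
  · exact mem_sigM_of hG nPBBQ dPBBQ dAPPB dAPBQ (by rw [EB]; exact apB)
  · exact mem_sigM_of hG nAPBQ.symm (G.dag_symm dAPBQ) dPBBQ (G.dag_symm dAPPB) diag4
  · exact mem_sigM_of hG nAPPB dAPPB (G.dag_symm dAPBQ) (G.dag_symm dPBBQ)
      (by rw [EP]; exact bqP)
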